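/- Let Δ = R(θ⁰) − inf R < ∞, let N ≥ 1, let ε ≥ 0, and suppose the iterates satisfy θ^{k+1} = θ^k − (1/L)·ĝ_k where ‖ĝ_k − ∇R(θ^k)‖ ≤ ε for all k = 0, …, N−1. Then (1/N)·Σ_{k=0}^{N−1} ‖∇R(θ^k)‖² ≤ 2LΔ/N + ε². -/

import Mathlib

open scoped RealInnerProductSpace

lemma descent_lemma {F : Type*} [NormedAddCommGroup F] [InnerProductSpace ℝ F]
    [CompleteSpace F]
    (R : F → ℝ) (hR : Differentiable ℝ R) (L : ℝ) (hL : 0 < L)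
    (hsmooth : ∀ a b : F, ‖gradient R a - gradient R b‖ ≤ L * ‖a - b‖)
    (x v : F) :
    R (x + v) ≤ R x + ⟪gradient R x, v⟫ + L / 2 * ‖v‖ ^ 2 := by
  have hgradcont : Continuous (gradient R) := by
    refine (LipschitzWith.of_dist_le_mul (K := ⟨L, hL.le⟩) ?_).continuous
    intro a b; simp only [dist_eq_norm]; exact hsmooth a b
  have hder : ∀ t : ℝ, HasDerivAt (fun t : ℝ => R (x + t • v))
      ⟪gradient R (x + t • v), v⟫ t := by
    intro t
    have h1 : HasDerivAt (fun t : ℝ => x + t • v) v t := by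
      simpa using ((hasDerivAt_id t).smul_const v).const_add x
    have h2 := ((hR (x + t • v)).hasGradientAt.hasFDerivAt).comp_hasDerivAt t h1
    simpa [InnerProductSpace.toDual_apply_apply, Function.comp_def] using h2
  have hcont : Continuous fun t : ℝ => ⟪gradient R (x + t • v), v⟫ :=
    (hgradcont.comp (by continuity)).inner continuous_const
  have hftc : ∫ t in (0:ℝ)..1, ⟪gradient R (x + t • v), v⟫ = R (x + v) - R x := by
    have := intervalIntegral.integral_eq_sub_of_hasDerivAt
      (f := fun t : ℝ => R (x + t • v)) (f' := fun t : ℝ => ⟪gradient R (x + t • v), v⟫)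
      (fun t _ => hder t) (hcont.intervalIntegrable 0 1)
    simpa using this
  have hbound : ∫ t in (0:ℝ)..1, ⟪gradient R (x + t • v), v⟫
      ≤ ∫ t in (0:ℝ)..1, (⟪gradient R x, v⟫ + L * t * ‖v‖ ^ 2) := by
    apply intervalIntegral.integral_mono_on (by norm_num)
      (hcont.intervalIntegrable 0 1)
      ((by continuity : Continuous fun t : ℝ => ⟪gradient R x, v⟫ + L * t * ‖v‖ ^ 2).intervalIntegrable 0 1)
    intro t ht
    have h1 : ⟪gradient R (x + t • v) - gradient R x, v⟫
        ≤ ‖gradient R (x + t • v) - gradient R x‖ * ‖v‖ := real_inner_le_norm _ _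
    have h2 : ‖gradient R (x + t • v) - gradient R x‖ ≤ L * (t * ‖v‖) := by
      have := hsmooth (x + t • v) x
      simpa [norm_smul, abs_of_nonneg ht.1] using this
    have h3 : ‖gradient R (x + t • v) - gradient R x‖ * ‖v‖ ≤ L * t * ‖v‖ ^ 2 := by
      have := mul_le_mul_of_nonneg_right h2 (norm_nonneg v)
      nlinarith [norm_nonneg v]
    have h4 : ⟪gradient R (x + t • v), v⟫ = ⟪gradient R x, v⟫
        + ⟪gradient R (x + t • v) - gradient R x, v⟫ := by
      rw [inner_sub_left]; ring
    linarith
  have hval : ∫ t in (0:ℝ)..1, (⟪gradient R x, v⟫ + L * t * ‖v‖ ^ 2)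
      = ⟪gradient R x, v⟫ + L / 2 * ‖v‖ ^ 2 := by
    rw [intervalIntegral.integral_add (intervalIntegrable_const)
      ((by fun_prop : Continuous fun t : ℝ => L * t * ‖v‖ ^ 2).intervalIntegrable 0 1)]
    simp [mul_assoc, intervalIntegral.integral_const_mul, integral_id]
    ring
  linarith


/-- deterministic gradient descent with an `ε`-inexact gradient oracle on an
`L`-smooth function bounded below: with step size `1/L` and `Δ = R(θ⁰) - inf R`,
`(1/N) ∑_{k=0}^{N-1} ‖∇R(θ^k)‖² ≤ 2LΔ/N + ε²`. -/
theorem inexact_gd_convergence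
    {F : Type*} [NormedAddCommGroup F] [InnerProductSpace ℝ F] [FiniteDimensional ℝ F]
    (R : F → ℝ) (hR : Differentiable ℝ R)
    (L : ℝ) (hL : 0 < L)
    (hsmooth : ∀ a b : F, ‖gradient R a - gradient R b‖ ≤ L * ‖a - b‖)
    (hbdd : BddBelow (Set.range R))
    (N : ℕ) (hN : 1 ≤ N) (ε : ℝ) (hε : 0 ≤ ε)
    (θ : ℕ → F) (ghat : ℕ → F)
    (Δ : ℝ) (hΔ : Δ = R (θ 0) - ⨅ w, R w)
    (hstep : ∀ k, k < N → θ (k + 1) = θ k - (1 / L) • ghat k)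
    (herr : ∀ k, k < N → ‖ghat k - gradient R (θ k)‖ ≤ ε) :
    (1 / N : ℝ) * ∑ k ∈ Finset.range N, ‖gradient R (θ k)‖ ^ 2
      ≤ 2 * L * Δ / N + ε ^ 2 := by
  have key : ∀ k, k < N → ‖gradient R (θ k)‖ ^ 2
      ≤ 2 * L * (R (θ k) - R (θ (k + 1))) + ε ^ 2 := by
    intro k hk
    set g := gradient R (θ k) with hg
    set e := ghat k - g with he
    have hghat : ghat k = g + e := by rw [he]; abel
    have hnext : θ (k + 1) = θ k + (-(1 / L)) • (g + e) := by
      rw [hstep k hk, hghat]; module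
    have hd := descent_lemma R hR L hL hsmooth (θ k) ((-(1 / L)) • (g + e))
    rw [← hnext] at hd
    have hinner : ⟪g, (-(1 / L)) • (g + e)⟫
        = -(1 / L) * (‖g‖ ^ 2 + ⟪g, e⟫) := by
      rw [real_inner_smul_right, inner_add_right, real_inner_self_eq_norm_sq]
    have hnorm : ‖(-(1 / L)) • (g + e)‖ ^ 2
        = (1 / L) ^ 2 * (‖g‖ ^ 2 + 2 * ⟪g, e⟫ + ‖e‖ ^ 2) := by
      rw [norm_smul, mul_pow, ← norm_add_sq_real]
      simp [abs_of_pos (by positivity : (0:ℝ) < 1 / L)]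
    have hE : ‖e‖ ^ 2 ≤ ε ^ 2 :=
      pow_le_pow_left₀ (norm_nonneg _) (herr k hk) 2
    have hL' : L ≠ 0 := hL.ne'
    rw [hinner, hnorm] at hd
    have h2 : -(1 / L) * (‖g‖ ^ 2 + ⟪g, e⟫) + L / 2 * ((1 / L) ^ 2 * (‖g‖ ^ 2 + 2 * ⟪g, e⟫ + ‖e‖ ^ 2))
        = -(‖g‖ ^ 2) / (2 * L) + ‖e‖ ^ 2 / (2 * L) := by
      field_simp; ring
    have hd' : R (θ (k + 1)) - R (θ k) ≤ (‖e‖ ^ 2 - ‖g‖ ^ 2) / (2 * L) := by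
      have h4 : -(‖g‖ ^ 2) / (2 * L) + ‖e‖ ^ 2 / (2 * L) = (‖e‖ ^ 2 - ‖g‖ ^ 2) / (2 * L) := by
        ring
      linarith [h2, h4]
    have h5 := (le_div_iff₀ (by positivity : (0:ℝ) < 2 * L)).mp hd'
    nlinarith [h5, hE]
  have hsum : ∑ k ∈ Finset.range N, ‖gradient R (θ k)‖ ^ 2
      ≤ 2 * L * Δ + N * ε ^ 2 := by
    have h1 : ∑ k ∈ Finset.range N, ‖gradient R (θ k)‖ ^ 2
        ≤ ∑ k ∈ Finset.range N, (2 * L * (R (θ k) - R (θ (k + 1))) + ε ^ 2) :=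
      Finset.sum_le_sum fun k hk => key k (Finset.mem_range.mp hk)
    have h2 : ∑ k ∈ Finset.range N, (2 * L * (R (θ k) - R (θ (k + 1))) + ε ^ 2)
        = 2 * L * (R (θ 0) - R (θ N)) + N * ε ^ 2 := by
      rw [Finset.sum_add_distrib, ← Finset.mul_sum, Finset.sum_range_sub' (fun k => R (θ k))]
      simp [mul_comm]
    have hinf : (⨅ w, R w) ≤ R (θ N) := ciInf_le hbdd (θ N)
    have : R (θ 0) - R (θ N) ≤ Δ := by rw [hΔ]; linarith
    calc ∑ k ∈ Finset.range N, ‖gradient R (θ k)‖ ^ 2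
        ≤ 2 * L * (R (θ 0) - R (θ N)) + N * ε ^ 2 := by rw [← h2]; exact h1
      _ ≤ 2 * L * Δ + N * ε ^ 2 := by nlinarith [hL]
  have hNpos : (0:ℝ) < N := by exact_mod_cast hN
  have := mul_le_mul_of_nonneg_left hsum (by positivity : (0:ℝ) ≤ 1 / N)
  calc (1 / N : ℝ) * ∑ k ∈ Finset.range N, ‖gradient R (θ k)‖ ^ 2
      ≤ (1 / N) * (2 * L * Δ + N * ε ^ 2) := this
    _ = 2 * L * Δ / N + ε ^ 2 := by field_simp
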